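/- arXiv:1303.1577 — 3 statements merged into one kernel-verified Lean document; each statement's English description precedes it below -/
import Mathlib

section
/- For the family of polynomials Q₁,...,Q_ℓ in ℝ[X₁,...,X_k] from Example 15, the variety V_ℓ = Zer({Q₁,...,Q_ℓ}, ℝ^k) has exactly (1/2^k) · d₁^{k₀-k₁} · d₂^{k₁-k₂} ⋯ d_{ℓ-1}^{k_{ℓ-2}-k_{ℓ-1}} · d_ℓ^{k_{ℓ-1}} connected components. -/
open Finset

/-- Index of the interval containing `n` (for `1 ≤ n ≤ k`). -/
def idxF (k ℓ : ℕ) (kseq : ℕ → ℕ) (n : ℕ) : ℕ :=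
  Nat.find (⟨ℓ, Or.inr le_rfl⟩ : ∃ i, n ≤ k - kseq i ∨ ℓ ≤ i)

theorem kseq_anti (ℓ : ℕ) (kseq : ℕ → ℕ)
    (hkmono : ∀ i < ℓ, kseq (i + 1) ≤ kseq i) :
    ∀ i j, i ≤ j → j ≤ ℓ → kseq j ≤ kseq i := by
  intro i j hij hjl
  induction j with
  | zero => rw [Nat.le_zero.mp hij]
  | succ m ih =>
    rcases Nat.eq_or_lt_of_le hij with h | h
    · exact h ▸ le_rfl
    · exact le_trans (hkmono m (by omega)) (ih (by omega) (by omega))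

theorem idxF_spec (k ℓ : ℕ) (kseq : ℕ → ℕ) (hℓ : 1 ≤ ℓ)
    (hk0 : kseq 0 = k) (hkl : kseq ℓ = 0) {n : ℕ} (h1 : 1 ≤ n) (h2 : n ≤ k) :
    1 ≤ idxF k ℓ kseq n ∧ idxF k ℓ kseq n ≤ ℓ ∧
      k - kseq (idxF k ℓ kseq n - 1) < n ∧ n ≤ k - kseq (idxF k ℓ kseq n) := by
  have hfind : n ≤ k - kseq (idxF k ℓ kseq n) ∨ ℓ ≤ idxF k ℓ kseq n :=
    Nat.find_spec (⟨ℓ, Or.inr le_rfl⟩ : ∃ i, n ≤ k - kseq i ∨ ℓ ≤ i)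
  have hmin : ∀ j, j < idxF k ℓ kseq n → ¬(n ≤ k - kseq j ∨ ℓ ≤ j) :=
    fun j hj => Nat.find_min (⟨ℓ, Or.inr le_rfl⟩ : ∃ i, n ≤ k - kseq i ∨ ℓ ≤ i) hj
  set i := idxF k ℓ kseq n with hi
  have hile : i ≤ ℓ := by
    by_contra hc
    exact (hmin ℓ (by omega)) (Or.inr le_rfl)
  have hgood : n ≤ k - kseq i := by
    rcases hfind with h | h
    · exact h
    · have : i = ℓ := le_antisymm hile h
      rw [this, hkl]; omega
  have h1i : 1 ≤ i := by
    by_contra hc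
    have h0 : i = 0 := by omega
    rw [h0, hk0] at hgood
    omega
  have hprev : ¬(n ≤ k - kseq (i - 1)) := by
    have := hmin (i - 1) (by omega)
    push_neg at this
    intro hc; exact absurd hc (by omega)
  exact ⟨h1i, hile, by omega, hgood⟩

theorem idxF_unique (k ℓ : ℕ) (kseq : ℕ → ℕ) (hℓ : 1 ≤ ℓ)
    (hk0 : kseq 0 = k) (hkl : kseq ℓ = 0)
    (hkmono : ∀ i < ℓ, kseq (i + 1) ≤ kseq i)
    {n i : ℕ} (hi1 : 1 ≤ i) (hi2 : i ≤ ℓ)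
    (ha : k - kseq (i - 1) < n) (hb : n ≤ k - kseq i) :
    idxF k ℓ kseq n = i := by
  have h1 : 1 ≤ n := by omega
  have h2 : n ≤ k := by
    have : kseq i ≤ kseq 0 := kseq_anti ℓ kseq hkmono 0 i (by omega) hi2
    omega
  obtain ⟨j1, j2, j3, j4⟩ := idxF_spec k ℓ kseq hℓ hk0 hkl h1 h2
  set j := idxF k ℓ kseq n
  by_contra hne
  rcases Nat.lt_or_ge j i with h | h
  · have : kseq (i - 1) ≤ kseq j := kseq_anti ℓ kseq hkmono j (i - 1) (by omega) (by omega)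
    omega
  · have hij : i ≤ j - 1 := by omega
    have : kseq (j - 1) ≤ kseq i := kseq_anti ℓ kseq hkmono i (j - 1) hij (by omega)
    omega

theorem sum_tele (k ℓ : ℕ) (kseq : ℕ → ℕ) (hk0 : kseq 0 = k)
    (hkmono : ∀ i < ℓ, kseq (i + 1) ≤ kseq i) :
    ∀ n, n ≤ ℓ → ∑ i ∈ Icc 1 n, (kseq (i - 1) - kseq i) = k - kseq n := by
  intro n
  induction n with
  | zero => intro _; simp [hk0]
  | succ m ih =>
    intro hml
    have hins : Icc 1 (m + 1) = insert (m + 1) (Icc 1 m) := by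
      ext x; simp only [Finset.mem_Icc, Finset.mem_insert]; omega
    rw [hins, Finset.sum_insert (by simp), ih (by omega)]
    have h1 : kseq (m + 1) ≤ kseq m := hkmono m (by omega)
    have h2 : kseq m ≤ kseq 0 := kseq_anti ℓ kseq hkmono 0 m (by omega) (by omega)
    simp only [Nat.add_sub_cancel]
    omega

theorem stmt_3 (k ℓ : ℕ) (hℓ : 1 ≤ ℓ) (kseq : ℕ → ℕ) (d : ℕ → ℕ)
    (hk0 : kseq 0 = k) (hkl : kseq ℓ = 0)
    (hkmono : ∀ i < ℓ, kseq (i + 1) ≤ kseq i)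
    (hde : ∀ i ∈ Finset.Icc 1 ℓ, Even (d i) ∧ 0 < d i) :
    ∀ V : Set (Fin k → ℝ),
      V = {x | ∀ i ∈ Finset.Icc 1 ℓ,
        ∑ j ∈ Finset.univ.filter
            (fun j : Fin k => k - kseq (i - 1) + 1 ≤ (j : ℕ) + 1 ∧ (j : ℕ) + 1 ≤ k - kseq i),
          (∏ h ∈ Finset.Icc 1 (d i / 2), (x j - (h : ℝ))) ^ 2 = 0} →
      2 ^ k * Nat.card (ConnectedComponents ↥V) =
        ∏ i ∈ Finset.Icc 1 ℓ, d i ^ (kseq (i - 1) - kseq i) := by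
  intro V hV
  set m : ℕ → ℕ := fun n => d (idxF k ℓ kseq n) / 2 with hm
  set S : Fin k → Finset ℝ := fun j => (Icc 1 (m ((j : ℕ) + 1))).image (Nat.cast) with hS
  -- Step 1: V is the set of x with each coordinate in S j
  have hVchar : V = {x : Fin k → ℝ | ∀ j : Fin k, x j ∈ (S j : Set ℝ)} := by
    rw [hV]
    ext x
    simp only [Set.mem_setOf_eq]
    constructor
    · intro hx j
      have hjk : (j : ℕ) < k := j.isLt
      obtain ⟨i1, i2, i3, i4⟩ := idxF_spec k ℓ kseq hℓ hk0 hkl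
        (n := (j : ℕ) + 1) (by omega) (by omega)
      set i := idxF k ℓ kseq ((j : ℕ) + 1) with hi
      have hsum := hx i (Finset.mem_Icc.2 ⟨i1, i2⟩)
      have hmem : j ∈ Finset.univ.filter
          (fun j : Fin k => k - kseq (i - 1) + 1 ≤ (j : ℕ) + 1 ∧ (j : ℕ) + 1 ≤ k - kseq i) := by
        simp only [Finset.mem_filter, Finset.mem_univ, true_and]
        omega
      have hterm : (∏ h ∈ Finset.Icc 1 (d i / 2), (x j - (h : ℝ))) ^ 2 = 0 :=
        (Finset.sum_eq_zero_iff_of_nonneg (fun _ _ => sq_nonneg _)).1 hsum j hmem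
      have hprod : ∏ h ∈ Finset.Icc 1 (d i / 2), (x j - (h : ℝ)) = 0 :=
        pow_eq_zero_iff (by norm_num) |>.1 hterm
      obtain ⟨h, hh, hxh⟩ := Finset.prod_eq_zero_iff.1 hprod
      have hxj : x j = (h : ℝ) := by linarith [sub_eq_zero.1 hxh]
      simp only [hS, Finset.coe_image, Set.mem_image, Finset.mem_coe]
      exact ⟨h, by simpa [hm, ← hi] using hh, hxj.symm⟩
    · intro hx i hi
      apply Finset.sum_eq_zero
      intro j hj
      simp only [Finset.mem_filter, Finset.mem_univ, true_and] at hj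
      rw [Finset.mem_Icc] at hi
      have hidx : idxF k ℓ kseq ((j : ℕ) + 1) = i :=
        idxF_unique k ℓ kseq hℓ hk0 hkl hkmono hi.1 hi.2 (by omega) hj.2
      have hxj := hx j
      simp only [hS, Finset.coe_image, Set.mem_image, Finset.mem_coe, hm, hidx] at hxj
      obtain ⟨h, hh, hxh⟩ := hxj
      rw [Finset.mem_Icc] at hh
      have hz : ∏ h' ∈ Finset.Icc 1 (d i / 2), (x j - (h' : ℝ)) = 0 :=
        Finset.prod_eq_zero (Finset.mem_Icc.2 hh) (by rw [← hxh]; ring)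
      rw [hz]; ring
  -- Step 2: V is finite, hence discrete, hence components = points
  have hVfin : V.Finite := by
    rw [hVchar]
    have hpi : {x : Fin k → ℝ | ∀ j : Fin k, x j ∈ (S j : Set ℝ)} =
        Set.pi Set.univ (fun j => (S j : Set ℝ)) := by
      ext x; simp [Set.mem_pi]
    rw [hpi]
    exact Set.Finite.pi (fun j => (S j).finite_toSet)
  haveI : Finite ↥V := hVfin
  have hcards : Nat.card (ConnectedComponents ↥V) = Nat.card ↥V := by
    refine (Nat.card_eq_of_bijective (ConnectedComponents.mk : ↥V → ConnectedComponents ↥V)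
      ⟨?_, ConnectedComponents.surjective_coe⟩).symm
    intro a b hab
    have hcc : connectedComponent a = connectedComponent b := ConnectedComponents.coe_eq_coe.1 hab
    rw [connectedComponent_eq_singleton, connectedComponent_eq_singleton] at hcc
    exact Set.singleton_eq_singleton_iff.1 hcc
  -- Step 3: count points of V
  have hcardV : Nat.card ↥V = ∏ j : Fin k, m ((j : ℕ) + 1) := by
    rw [hVchar]
    have e : ↥{x : Fin k → ℝ | ∀ j : Fin k, x j ∈ (S j : Set ℝ)} ≃
        ∀ j : Fin k, {y : ℝ // y ∈ (S j : Set ℝ)} := Equiv.subtypePiEquivPi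
    rw [Nat.card_congr e, Nat.card_pi]
    refine Finset.prod_congr rfl fun j _ => ?_
    have hc : Nat.card {y : ℝ // y ∈ (S j : Set ℝ)} = (S j).card := by
      rw [Nat.card_coe_set_eq, Set.ncard_coe_finset]
    rw [hc, hS]
    rw [Finset.card_image_of_injective _ Nat.cast_injective, Nat.card_Icc]
    omega
  rw [hcards, hcardV]
  -- Step 4: the product identity
  have hprodrange : ∏ j : Fin k, m ((j : ℕ) + 1) = ∏ n ∈ Finset.range k, m (n + 1) :=
    Fin.prod_univ_eq_prod_range (fun n => m (n + 1)) k
  rw [hprodrange]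
  have hmaps : ∀ n ∈ Finset.range k, idxF k ℓ kseq (n + 1) ∈ Finset.Icc 1 ℓ := by
    intro n hn
    rw [Finset.mem_range] at hn
    obtain ⟨i1, i2, _, _⟩ := idxF_spec k ℓ kseq hℓ hk0 hkl (n := n + 1) (by omega) (by omega)
    exact Finset.mem_Icc.2 ⟨i1, i2⟩
  have hfib : ∏ n ∈ Finset.range k, m (n + 1) =
      ∏ i ∈ Finset.Icc 1 ℓ, (d i / 2) ^ (kseq (i - 1) - kseq i) := by
    rw [← Finset.prod_fiberwise_of_maps_to hmaps (fun n => m (n + 1))]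
    refine Finset.prod_congr rfl fun i hi => ?_
    rw [Finset.mem_Icc] at hi
    have hki : kseq i ≤ kseq (i - 1) :=
      kseq_anti ℓ kseq hkmono (i - 1) i (by omega) hi.2
    have hk1 : kseq (i - 1) ≤ k := by
      have := kseq_anti ℓ kseq hkmono 0 (i - 1) (by omega) (by omega)
      omega
    have hfilter : (Finset.range k).filter (fun n => idxF k ℓ kseq (n + 1) = i) =
        Finset.Ico (k - kseq (i - 1)) (k - kseq i) := by
      ext n
      simp only [Finset.mem_filter, Finset.mem_range, Finset.mem_Ico]
      constructor
      · rintro ⟨hn, hidx⟩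
        obtain ⟨_, _, j3, j4⟩ := idxF_spec k ℓ kseq hℓ hk0 hkl (n := n + 1) (by omega) (by omega)
        rw [hidx] at j3 j4
        omega
      · rintro ⟨ha, hb⟩
        have hn : n < k := by omega
        exact ⟨hn, idxF_unique k ℓ kseq hℓ hk0 hkl hkmono hi.1 hi.2 (by omega) (by omega)⟩
    calc ∏ n ∈ (Finset.range k).filter (fun n => idxF k ℓ kseq (n + 1) = i), m (n + 1)
        = ∏ n ∈ (Finset.range k).filter (fun n => idxF k ℓ kseq (n + 1) = i), (d i / 2) := by
          refine Finset.prod_congr rfl fun n hn => ?_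
          rw [Finset.mem_filter] at hn
          simp [hm, hn.2]
      _ = (d i / 2) ^ (kseq (i - 1) - kseq i) := by
          rw [Finset.prod_const, hfilter, Nat.card_Ico]
          congr 1
          omega
  rw [hfib]
  -- Step 5: absorb 2^k
  have hsum : ∑ i ∈ Finset.Icc 1 ℓ, (kseq (i - 1) - kseq i) = k := by
    rw [sum_tele k ℓ kseq hk0 hkmono ℓ le_rfl, hkl]
    omega
  rw [← hsum, ← Finset.prod_pow_eq_pow_sum, ← Finset.prod_mul_distrib]
  refine Finset.prod_congr rfl fun i hi => ?_
  rw [← Nat.mul_pow]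
  congr 1
  obtain ⟨he, hp⟩ := hde i hi
  obtain ⟨r, hr⟩ := he
  omega
end

section
/- Let τ = (τ₀, τ₁, ..., τ_{ℓ-1}) with k = τ₀ ≥ τ₁ ≥ ⋯ ≥ τ_{ℓ-1} ≥ 0 and k = k₀ ≥ k₁ ≥ ⋯ with τ_i ≤ k_i for 1 ≤ i < ℓ, and suppose d_{i-1}/d_i ≤ 1/(k+1) for 2 ≤ i ≤ ℓ with all d_i ≥ 2. Then the ratio [d_ℓ^{τ_{ℓ-1}} ∏_{1≤i<ℓ} ((k - τ_{i-1} + 1) d_i)^{τ_{i-1} - τ_i}] / [d_ℓ^{k_{ℓ-1}} ∏_{1≤i<ℓ} d_i^{k_{i-1} - k_i}] is at most (k+1)^k. -/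
/-- Telescoping sum with natural subtraction. -/
private lemma tele_sum (τ : ℕ → ℕ) :
    ∀ n, 1 ≤ n → (∀ i < n, τ (i + 1) ≤ τ i) →
      (∑ i ∈ Finset.Ico 1 n, (τ (i - 1) - τ i)) + τ (n - 1) = τ 0 := by
  intro n hn
  induction n, hn using Nat.le_induction with
  | base => intro _; simp
  | succ n hn ih =>
    intro hmono
    have hmono' : ∀ i < n, τ (i + 1) ≤ τ i := fun i hi => hmono i (Nat.lt_succ_of_lt hi)
    have h1 : τ n ≤ τ (n - 1) := by
      have := hmono (n - 1) (by omega)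
      have hrw : n - 1 + 1 = n := by omega
      rwa [hrw] at this
    rw [Finset.sum_Ico_succ_top hn, Nat.succ_sub_one]
    have := ih hmono'
    omega

/-- Key monotonicity lemma: replacing τ by the pointwise larger kseq (with same value at 0)
increases the product, since d is increasing. -/
private lemma key (τ kseq : ℕ → ℕ) (d : ℕ → ℝ) :
    ∀ n, 1 ≤ n → τ 0 = kseq 0 →
    (∀ i < n, τ (i + 1) ≤ τ i) →
    (∀ i < n, kseq (i + 1) ≤ kseq i) →
    (∀ i, 1 ≤ i → i < n → τ i ≤ kseq i) →
    (∀ i, 1 ≤ i → i ≤ n → 0 < d i) →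
    (∀ i, 2 ≤ i → i ≤ n → d (i - 1) ≤ d i) →
    d n ^ τ (n - 1) * ∏ i ∈ Finset.Ico 1 n, d i ^ (τ (i - 1) - τ i) ≤
      d n ^ kseq (n - 1) * ∏ i ∈ Finset.Ico 1 n, d i ^ (kseq (i - 1) - kseq i) := by
  intro n hn
  induction n, hn using Nat.le_induction with
  | base => intro h0 _ _ _ _ _; simp [h0]
  | succ n hn ih =>
    intro h0 hτm hkm hτk hdpos hdmono
    have hdn : 0 < d n := hdpos n hn (by omega)
    have hdn1 : 0 < d (n + 1) := hdpos (n + 1) (by omega) le_rfl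
    have hr : d n ≤ d (n + 1) := by
      have := hdmono (n + 1) (by omega) le_rfl
      simpa using this
    -- rewrite both sides
    have hτn : τ n ≤ τ (n - 1) := by
      have := hτm (n - 1) (by omega)
      rwa [show n - 1 + 1 = n by omega] at this
    have hkn : kseq n ≤ kseq (n - 1) := by
      have := hkm (n - 1) (by omega)
      rwa [show n - 1 + 1 = n by omega] at this
    have split : ∀ (σ : ℕ → ℕ), σ n ≤ σ (n - 1) →
        d (n + 1) ^ σ ((n + 1) - 1) * ∏ i ∈ Finset.Ico 1 (n + 1), d i ^ (σ (i - 1) - σ i)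
        = (d (n + 1) / d n) ^ σ n *
          (d n ^ σ (n - 1) * ∏ i ∈ Finset.Ico 1 n, d i ^ (σ (i - 1) - σ i)) := by
      intro σ hσ
      have e1 : d n ^ (σ (n - 1) - σ n) * d n ^ σ n = d n ^ σ (n - 1) := by
        rw [← pow_add]; congr 1; omega
      rw [Finset.prod_Ico_succ_top hn, show (n + 1) - 1 = n from rfl]
      rw [div_pow, div_mul_eq_mul_div, eq_div_iff (by positivity)]
      rw [mul_assoc, mul_assoc, e1]
      ring
    rw [split τ hτn, split kseq hkn]
    have h1 : (d (n + 1) / d n) ^ τ n ≤ (d (n + 1) / d n) ^ kseq n := by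
      apply pow_le_pow_right₀
      · rw [le_div_iff₀ hdn]; linarith
      · exact hτk n hn (by omega)
    have h2 : d n ^ τ (n - 1) * ∏ i ∈ Finset.Ico 1 n, d i ^ (τ (i - 1) - τ i) ≤
        d n ^ kseq (n - 1) * ∏ i ∈ Finset.Ico 1 n, d i ^ (kseq (i - 1) - kseq i) := by
      apply ih h0
      · exact fun i hi => hτm i (by omega)
      · exact fun i hi => hkm i (by omega)
      · exact fun i h1i h2i => hτk i h1i (by omega)
      · exact fun i h1i h2i => hdpos i h1i (by omega)
      · exact fun i h1i h2i => hdmono i h1i (by omega)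
    have hpos : 0 ≤ d n ^ τ (n - 1) * ∏ i ∈ Finset.Ico 1 n, d i ^ (τ (i - 1) - τ i) := by
      apply mul_nonneg (by positivity)
      apply Finset.prod_nonneg
      intro i hi
      simp only [Finset.mem_Ico] at hi
      exact pow_nonneg (hdpos i hi.1 (by omega)).le _
    have hrpos : 0 ≤ (d (n + 1) / d n) ^ kseq n := by positivity
    exact mul_le_mul h1 h2 hpos hrpos

theorem stmt_4 (k ℓ : ℕ) (hk : 1 ≤ k) (hℓ : 1 ≤ ℓ)
    (τ kseq : ℕ → ℕ) (d : ℕ → ℝ)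
    (hτ0 : τ 0 = k) (hk0 : kseq 0 = k)
    (hτmono : ∀ i < ℓ, τ (i + 1) ≤ τ i)
    (hkmono : ∀ i < ℓ, kseq (i + 1) ≤ kseq i)
    (hτk : ∀ i, 1 ≤ i → i < ℓ → τ i ≤ kseq i)
    (hd1 : 2 ≤ d 1)
    (hdpos : ∀ i, 1 ≤ i → i ≤ ℓ → 0 < d i)
    (hdgeo : ∀ i, 2 ≤ i → i ≤ ℓ → (k + 1 : ℝ) * d (i - 1) ≤ d i) :
    (d ℓ ^ τ (ℓ - 1) *
        ∏ i ∈ Finset.Ico 1 ℓ, (((k : ℝ) - (τ (i - 1) : ℝ) + 1) * d i) ^ (τ (i - 1) - τ i)) /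
      (d ℓ ^ kseq (ℓ - 1) * ∏ i ∈ Finset.Ico 1 ℓ, d i ^ (kseq (i - 1) - kseq i)) ≤
    (k + 1 : ℝ) ^ k := by
  have hdmono : ∀ i, 2 ≤ i → i ≤ ℓ → d (i - 1) ≤ d i := by
    intro i h2 hℓ'
    have hge := hdgeo i h2 hℓ'
    have hp : 0 < d (i - 1) := hdpos (i - 1) (by omega) (by omega)
    have hk' : (1 : ℝ) ≤ (k : ℝ) := by exact_mod_cast hk
    nlinarith
  -- τ i ≤ k for all i
  have hτle : ∀ i, i < ℓ → τ i ≤ k := by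
    intro i hi
    induction i with
    | zero => omega
    | succ n ihn =>
      have := hτmono n (by omega)
      have := ihn (by omega)
      omega
  -- denominator positive
  have hDpos : 0 < d ℓ ^ kseq (ℓ - 1) * ∏ i ∈ Finset.Ico 1 ℓ, d i ^ (kseq (i - 1) - kseq i) := by
    apply mul_pos (pow_pos (hdpos ℓ hℓ le_rfl) _)
    apply Finset.prod_pos
    intro i hi
    simp only [Finset.mem_Ico] at hi
    exact pow_pos (hdpos i hi.1 (by omega)) _
  rw [div_le_iff₀ hDpos]
  -- split numerator
  have hsplit : (d ℓ ^ τ (ℓ - 1) *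
      ∏ i ∈ Finset.Ico 1 ℓ, (((k : ℝ) - (τ (i - 1) : ℝ) + 1) * d i) ^ (τ (i - 1) - τ i))
      = (∏ i ∈ Finset.Ico 1 ℓ, ((k : ℝ) - (τ (i - 1) : ℝ) + 1) ^ (τ (i - 1) - τ i)) *
        (d ℓ ^ τ (ℓ - 1) * ∏ i ∈ Finset.Ico 1 ℓ, d i ^ (τ (i - 1) - τ i)) := by
    simp_rw [mul_pow]
    rw [Finset.prod_mul_distrib]
    ring
  rw [hsplit]
  have hfac : (∏ i ∈ Finset.Ico 1 ℓ, ((k : ℝ) - (τ (i - 1) : ℝ) + 1) ^ (τ (i - 1) - τ i))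
      ≤ (k + 1 : ℝ) ^ k := by
    calc (∏ i ∈ Finset.Ico 1 ℓ, ((k : ℝ) - (τ (i - 1) : ℝ) + 1) ^ (τ (i - 1) - τ i))
        ≤ ∏ i ∈ Finset.Ico 1 ℓ, ((k : ℝ) + 1) ^ (τ (i - 1) - τ i) := by
          apply Finset.prod_le_prod
          · intro i hi
            simp only [Finset.mem_Ico] at hi
            have h1 : τ (i - 1) ≤ k := hτle (i - 1) (by omega)
            have h2 : (τ (i - 1) : ℝ) ≤ (k : ℝ) := by exact_mod_cast h1
            have : (1 : ℝ) ≤ (k : ℝ) - (τ (i - 1) : ℝ) + 1 := by linarith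
            positivity
          · intro i hi
            simp only [Finset.mem_Ico] at hi
            have h1 : τ (i - 1) ≤ k := hτle (i - 1) (by omega)
            have h2 : (τ (i - 1) : ℝ) ≤ (k : ℝ) := by exact_mod_cast h1
            apply pow_le_pow_left₀ (by linarith)
            have : (0 : ℝ) ≤ (τ (i - 1) : ℝ) := by positivity
            linarith
      _ = ((k : ℝ) + 1) ^ (∑ i ∈ Finset.Ico 1 ℓ, (τ (i - 1) - τ i)) := by
          rw [Finset.prod_pow_eq_pow_sum]
      _ ≤ (k + 1 : ℝ) ^ k := by
          apply pow_le_pow_right₀ (by norm_num)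
          have := tele_sum τ ℓ hℓ hτmono
          omega
  have hkey := key τ kseq d ℓ hℓ (by omega) hτmono hkmono hτk hdpos hdmono
  have hAnn : 0 ≤ d ℓ ^ τ (ℓ - 1) * ∏ i ∈ Finset.Ico 1 ℓ, d i ^ (τ (i - 1) - τ i) := by
    apply mul_nonneg (pow_nonneg (hdpos ℓ hℓ le_rfl).le _)
    apply Finset.prod_nonneg
    intro i hi
    simp only [Finset.mem_Ico] at hi
    exact pow_nonneg (hdpos i hi.1 (by omega)).le _
  calc (∏ i ∈ Finset.Ico 1 ℓ, ((k : ℝ) - (τ (i - 1) : ℝ) + 1) ^ (τ (i - 1) - τ i)) *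
        (d ℓ ^ τ (ℓ - 1) * ∏ i ∈ Finset.Ico 1 ℓ, d i ^ (τ (i - 1) - τ i))
      ≤ (k + 1 : ℝ) ^ k *
        (d ℓ ^ kseq (ℓ - 1) * ∏ i ∈ Finset.Ico 1 ℓ, d i ^ (kseq (i - 1) - kseq i)) := by
        apply mul_le_mul hfac hkey hAnn (by positivity)
end

section
/- With the notation of Proposition 28: if in addition x is a nondegenerate critical point of X_k restricted to V (the Hessian of X_k as a function of (X₁,...,X_p) via the local graph parametrization is nonsingular at x), then x is a simple zero of the augmented square system F_J = F ∪ {jac_{J∪{i}∖{k}} : i ∈ [1,k]∖J} with J = [p+1, k], i.e., the Jacobian of this system of k equations in k unknowns is invertible at x. -/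
open MvPolynomial ContinuousLinearMap

lemma mv_eval_hasFDerivAt {σ : Type*} [Fintype σ] [DecidableEq σ]
    (q : MvPolynomial σ ℝ) (x : σ → ℝ) :
    HasFDerivAt (fun v => eval v q)
      (∑ i, eval x (pderiv i q) • (ContinuousLinearMap.proj i : ((σ → ℝ) →L[ℝ] ℝ))) x := by
  induction q using MvPolynomial.induction_on with
  | C a =>
      simp only [eval_C, pderiv_C, map_zero, zero_smul, Finset.sum_const_zero]
      exact hasFDerivAt_const a x
  | add q r hq hr =>
      simp only [map_add, add_smul, Finset.sum_add_distrib]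
      exact hq.add hr
  | mul_X q i hq =>
      have h1 : HasFDerivAt (fun v : σ → ℝ => v i)
          (ContinuousLinearMap.proj i : ((σ → ℝ) →L[ℝ] ℝ)) x := hasFDerivAt_apply i x
      have h2 : HasFDerivAt (fun v => eval v q * v i)
          (eval x q • (ContinuousLinearMap.proj i : ((σ → ℝ) →L[ℝ] ℝ))
            + x i • ∑ i, eval x (pderiv i q) • (ContinuousLinearMap.proj i : ((σ → ℝ) →L[ℝ] ℝ))) x :=
        hq.mul h1
      simp only [map_mul, eval_X]
      convert h2 using 1
      have h3 : ∀ j, pderiv j (q * X i) = pderiv j q * X i + q * (if i = j then 1 else 0) := by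
        intro j
        rw [pderiv_mul, pderiv_X]
        simp [Pi.single_apply]
      simp only [h3]
      simp only [map_add, map_mul, eval_X, add_smul, Finset.sum_add_distrib, apply_ite (eval x),
        map_one, map_zero, mul_ite, mul_one, mul_zero, ite_smul, zero_smul, Finset.smul_sum,
        smul_smul]
      rw [Finset.sum_ite_eq Finset.univ i
        (fun j => eval x q • (ContinuousLinearMap.proj j : ((σ → ℝ) →L[ℝ] ℝ)))]
      simp [add_comm, mul_comm]

variable {p m : ℕ} {φ : (Fin p → ℝ) → (Fin (m + 1) → ℝ)} {y₀ : Fin p → ℝ}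

lemma graph_hasFDerivAt (hd : DifferentiableAt ℝ φ y₀) :
    HasFDerivAt (fun z => Sum.elim z (φ z))
      (ContinuousLinearMap.pi (Sum.elim (fun j => ContinuousLinearMap.proj j)
        (fun b => (ContinuousLinearMap.proj b).comp (fderiv ℝ φ y₀)))) y₀ := by
  rw [hasFDerivAt_pi']
  rintro (j | b)
  · simpa [proj_pi] using hasFDerivAt_apply j y₀
  · simpa [proj_pi] using (show HasFDerivAt (fun z => φ z b) _ y₀ from
      (hasFDerivAt_apply (𝕜 := ℝ) b (φ y₀)).comp y₀ hd.hasFDerivAt)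

lemma chain_hasFDerivAt (hd : DifferentiableAt ℝ φ y₀)
    (q : MvPolynomial (Fin p ⊕ Fin (m + 1)) ℝ) :
    HasFDerivAt (fun z => eval (Sum.elim z (φ z)) q)
      (((∑ v, eval (Sum.elim y₀ (φ y₀)) (pderiv v q) •
          (ContinuousLinearMap.proj v : (((Fin p ⊕ Fin (m+1)) → ℝ) →L[ℝ] ℝ)))).comp
        (ContinuousLinearMap.pi (Sum.elim (fun j => ContinuousLinearMap.proj j)
          (fun b => (ContinuousLinearMap.proj b).comp (fderiv ℝ φ y₀))))) y₀ :=
  (mv_eval_hasFDerivAt q _).comp y₀ (graph_hasFDerivAt hd)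

lemma chain_fderiv_apply (hd : DifferentiableAt ℝ φ y₀)
    (q : MvPolynomial (Fin p ⊕ Fin (m + 1)) ℝ) (j : Fin p) :
    fderiv ℝ (fun z => eval (Sum.elim z (φ z)) q) y₀ (Pi.single j 1)
      = eval (Sum.elim y₀ (φ y₀)) (pderiv (Sum.inl j) q)
        + ∑ b, eval (Sum.elim y₀ (φ y₀)) (pderiv (Sum.inr b) q)
            * fderiv ℝ φ y₀ (Pi.single j 1) b := by
  rw [(chain_hasFDerivAt hd q).fderiv]
  simp only [coe_comp', Function.comp_apply, pi_apply, ContinuousLinearMap.sum_apply,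
    smul_apply, proj_apply, smul_eq_mul]
  rw [Fintype.sum_sum_type]
  simp [Pi.single_apply]

lemma fderiv_component (hd : DifferentiableAt ℝ φ y₀) (b : Fin (m + 1)) :
    fderiv ℝ (fun z => φ z b) y₀ = (ContinuousLinearMap.proj b).comp (fderiv ℝ φ y₀) :=
  ((hasFDerivAt_apply (𝕜 := ℝ) b (φ y₀)).comp y₀ hd.hasFDerivAt :
    HasFDerivAt (fun z => φ z b) ((ContinuousLinearMap.proj b).comp (fderiv ℝ φ y₀)) y₀).fderiv

lemma det_ne_zero_of_rank_eq {n : ℕ} (D : Matrix (Fin n) (Fin n) ℝ) (h : D.rank = n) :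
    D.det ≠ 0 := by
  intro h0
  obtain ⟨v, hv, hmv⟩ := (Matrix.exists_mulVec_eq_zero_iff).mpr h0
  have hsurj : Function.Surjective D.mulVecLin := by
    rw [← LinearMap.range_eq_top]
    apply Submodule.eq_top_of_finrank_eq
    rw [← Matrix.rank, h]
    simp
  have hinj : Function.Injective D.mulVecLin :=
    (LinearMap.injective_iff_surjective).mpr hsurj
  exact hv (hinj (by simpa [Matrix.mulVecLin_apply] using hmv))

lemma det_modified_id {n : ℕ} (c : Fin (n + 1) → ℝ) :
    Matrix.det (Matrix.of fun b d : Fin (n + 1) =>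
      if d = Fin.last n then c b else if b = d then 1 else 0) = c (Fin.last n) := by
  rw [Matrix.det_of_upperTriangular]
  · rw [Finset.prod_eq_single (Fin.last n)]
    · simp
    · intro b _ hb
      simp [Matrix.of_apply, hb, fun h => hb (by simpa using h)]
    · simp
  · intro i j hij
    have hj : j ≠ Fin.last n := by rintro rfl; exact absurd hij (not_lt.mpr (Fin.le_last i))
    have : i ≠ j := ne_of_gt hij
    simp [Matrix.of_apply, hj, this]

open MvPolynomial in
theorem stmt_13 (p m : ℕ)
    (F : Fin (m + 1) → MvPolynomial (Fin p ⊕ Fin (m + 1)) ℝ)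
    (x : (Fin p ⊕ Fin (m + 1)) → ℝ)
    (hzero : ∀ a, eval x (F a) = 0)
    (hrank : Matrix.rank
      (Matrix.of fun (a : Fin (m + 1)) (v : Fin p ⊕ Fin (m + 1)) =>
        eval x (pderiv v (F a))) = m + 1)
    (φ : (Fin p → ℝ) → (Fin (m + 1) → ℝ)) (U : Set (Fin p → ℝ))
    (hU : U ∈ nhds (x ∘ Sum.inl)) (hφ : ContDiffOn ℝ (⊤ : ℕ∞) φ U)
    (hgraph : ∀ y ∈ U, ∀ a, eval (Sum.elim y (φ y)) (F a) = 0)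
    (hφx : φ (x ∘ Sum.inl) = x ∘ Sum.inr)
    (hcrit : fderiv ℝ (fun y => φ y (Fin.last m)) (x ∘ Sum.inl) = 0)
    (hhess : Matrix.det (Matrix.of fun i j : Fin p =>
      fderiv ℝ (fun y => fderiv ℝ (fun z => φ z (Fin.last m)) y (Pi.single j 1))
        (x ∘ Sum.inl) (Pi.single i 1)) ≠ 0) :
    ∀ G : (Fin p ⊕ Fin (m + 1)) → MvPolynomial (Fin p ⊕ Fin (m + 1)) ℝ,
      G = Sum.elim
        (fun i : Fin p => Matrix.det (Matrix.of fun a b : Fin (m + 1) =>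
          pderiv (if b = Fin.last m then Sum.inl i else Sum.inr b) (F a)))
        F →
      (∀ e, eval x (G e) = 0) ∧
      Matrix.det (Matrix.of fun (e v : Fin p ⊕ Fin (m + 1)) =>
        eval x (pderiv v (G e))) ≠ 0 := by
  intro G hG
  subst hG
  set x₀ : Fin p → ℝ := x ∘ Sum.inl with hx₀
  set V : Set (Fin p → ℝ) := interior U with hVdef
  have hVopen : IsOpen V := isOpen_interior
  have hx₀V : x₀ ∈ V := mem_interior_iff_mem_nhds.mpr hU
  have hVU : V ⊆ U := interior_subset
  have hdiff : ∀ y ∈ V, DifferentiableAt ℝ φ y := fun y hy =>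
    (hφ.contDiffAt (mem_nhds_iff.mpr ⟨V, hVU, hVopen, hy⟩)).differentiableAt (by simp)
  have hgx : Sum.elim x₀ (φ x₀) = x := by
    funext v
    cases v with
    | inl j => rfl
    | inr b => simp [hφx]
  -- chain rule identity at every point of V
  have hK2 : ∀ y ∈ V, ∀ a j,
      eval (Sum.elim y (φ y)) (pderiv (Sum.inl j) (F a))
        + ∑ b, eval (Sum.elim y (φ y)) (pderiv (Sum.inr b) (F a))
            * fderiv ℝ φ y (Pi.single j 1) b = 0 := by
    intro y hy a j
    have he : (fun z => eval (Sum.elim z (φ z)) (F a)) =ᶠ[nhds y] fun _ => (0:ℝ) :=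
      Filter.eventuallyEq_of_mem (hVopen.mem_nhds hy) (fun z hz => hgraph z (hVU hz) a)
    have h0 : fderiv ℝ (fun z => eval (Sum.elim z (φ z)) (F a)) y = 0 := by
      rw [he.fderiv_eq]; exact fderiv_const_apply 0
    have := chain_fderiv_apply (hdiff y hy) (F a) j
    rw [h0] at this
    simpa using this.symm
  -- real matrices
  set D : Matrix (Fin (m+1)) (Fin (m+1)) ℝ :=
    Matrix.of (fun a b => eval x (pderiv (Sum.inr b) (F a))) with hD
  set P : Matrix (Fin (m+1)) (Fin p) ℝ :=
    Matrix.of (fun a j => eval x (pderiv (Sum.inl j) (F a))) with hP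
  set Dφm : Matrix (Fin (m+1)) (Fin p) ℝ :=
    Matrix.of (fun b j => fderiv ℝ φ x₀ (Pi.single j 1) b) with hDφm
  have hPD : ∀ a j, P a j + ∑ b, D a b * Dφm b j = 0 := by
    intro a j
    have := hK2 x₀ hx₀V a j
    rw [hgx] at this
    exact this
  -- the polynomial determinant rows, evaluated along the graph, at y ∈ V
  have hkey : ∀ y ∈ V, ∀ i : Fin p,
      eval (Sum.elim y (φ y)) (Matrix.det (Matrix.of fun a b : Fin (m + 1) =>
          pderiv (if b = Fin.last m then Sum.inl i else Sum.inr b) (F a)))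
        = eval (Sum.elim y (φ y)) (Matrix.det (Matrix.of fun a b : Fin (m+1) =>
            pderiv (Sum.inr b) (F a)))
          * (-(fderiv ℝ (fun z => φ z (Fin.last m)) y (Pi.single i 1))) := by
    intro y hy i
    set w := Sum.elim y (φ y) with hw
    rw [RingHom.map_det]
    set Dy : Matrix (Fin (m+1)) (Fin (m+1)) ℝ :=
      Matrix.of (fun a b => eval w (pderiv (Sum.inr b) (F a))) with hDy
    set Ey : Matrix (Fin (m+1)) (Fin (m+1)) ℝ :=
      Matrix.of (fun b d => if d = Fin.last m then -(fderiv ℝ φ y (Pi.single i 1) b)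
        else if b = d then 1 else 0) with hEy
    have hfact : (Matrix.of fun a b : Fin (m + 1) =>
        pderiv (if b = Fin.last m then Sum.inl i else Sum.inr b) (F a)).map (eval w)
        = Dy * Ey := by
      funext a d
      simp only [Matrix.map_apply, Matrix.of_apply, Matrix.mul_apply, hDy, hEy,
        Matrix.of_apply]
      by_cases hd : d = Fin.last m
      · subst hd
        simp only [eq_self_iff_true, if_true]
        have h2 : eval w (pderiv (Sum.inl i) (F a))
            = -∑ b, eval w (pderiv (Sum.inr b) (F a)) * fderiv ℝ φ y (Pi.single i 1) b := by
          have := hK2 y hy a i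
          rw [← hw] at this
          linarith
        rw [h2, neg_eq_iff_eq_neg, ← Finset.sum_neg_distrib]
        exact Finset.sum_congr rfl (fun b _ => by ring)
      · rw [if_neg hd]
        rw [Finset.sum_eq_single d]
        · simp [hd]
        · intro b _ hb
          simp [hd, hb]
        · simp
    rw [RingHom.mapMatrix_apply, hfact, Matrix.det_mul, hEy, det_modified_id]
    rw [RingHom.map_det, RingHom.mapMatrix_apply]
    congr 1
    rw [fderiv_component (hdiff y hy) (Fin.last m)]
    simp
  constructor
  · -- values vanish
    rintro (i | a)
    · have := hkey x₀ hx₀V i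
      rw [hgx] at this
      simp only [Sum.elim_inl]
      rw [this, hcrit]
      simp
    · exact hzero a
  · -- determinant nonzero
    -- Step 1 : D.det ≠ 0
    set S : Matrix (Fin (m+1)) (Fin p ⊕ Fin (m+1)) ℝ :=
      Matrix.of (fun b v => Sum.elim (fun j => -(Dφm b j)) (fun c => if b = c then 1 else 0) v)
      with hS
    have hfull : (Matrix.of fun (a : Fin (m + 1)) (v : Fin p ⊕ Fin (m + 1)) =>
        eval x (pderiv v (F a))) = D * S := by
      funext a v
      cases v with
      | inl j =>
          show P a j = (D * S) a (Sum.inl j)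
          rw [Matrix.mul_apply]
          simp only [hS, Matrix.of_apply, Sum.elim_inl]
          have h1 := hPD a j
          have h2 : ∑ b, D a b * -(Dφm b j) = -∑ b, D a b * Dφm b j := by
            rw [← Finset.sum_neg_distrib]
            exact Finset.sum_congr rfl (fun b _ => by ring)
          rw [h2]
          linarith
      | inr c =>
          show D a c = (D * S) a (Sum.inr c)
          rw [Matrix.mul_apply]
          simp only [hS, Matrix.of_apply, Sum.elim_inr, mul_ite, mul_one, mul_zero]
          rw [Finset.sum_ite_eq' Finset.univ c]
          simp
    have hrankD : D.rank = m + 1 := by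
      have h1 : (D * S).rank ≤ D.rank := Matrix.rank_mul_le_left D S
      rw [← hfull, hrank] at h1
      have h2 : D.rank ≤ m + 1 := Matrix.rank_le_width D
      omega
    have hdetD : D.det ≠ 0 := det_ne_zero_of_rank_eq D hrankD
    -- matrices A and B
    set A : Matrix (Fin p) (Fin p) ℝ := Matrix.of (fun i j =>
      eval x (pderiv (Sum.inl j) (Matrix.det (Matrix.of fun a b : Fin (m + 1) =>
        pderiv (if b = Fin.last m then Sum.inl i else Sum.inr b) (F a))))) with hA
    set B : Matrix (Fin p) (Fin (m+1)) ℝ := Matrix.of (fun i c =>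
      eval x (pderiv (Sum.inr c) (Matrix.det (Matrix.of fun a b : Fin (m + 1) =>
        pderiv (if b = Fin.last m then Sum.inl i else Sum.inr b) (F a))))) with hB
    have hblocks : (Matrix.of fun (e v : Fin p ⊕ Fin (m + 1)) =>
        eval x (pderiv v (Sum.elim
          (fun i : Fin p => Matrix.det (Matrix.of fun a b : Fin (m + 1) =>
            pderiv (if b = Fin.last m then Sum.inl i else Sum.inr b) (F a))) F e)))
        = Matrix.fromBlocks A B P D := by
      funext e v
      rcases e with i | a <;> rcases v with j | b <;>
        simp [Matrix.fromBlocks, hA, hB, hP, hD]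
    rw [hblocks]
    -- Hessian matrix
    set Hmat : Matrix (Fin p) (Fin p) ℝ := Matrix.of fun i j : Fin p =>
      fderiv ℝ (fun y => fderiv ℝ (fun z => φ z (Fin.last m)) y (Pi.single j 1))
        x₀ (Pi.single i 1) with hHmat
    set detp : MvPolynomial (Fin p ⊕ Fin (m+1)) ℝ :=
      Matrix.det (Matrix.of fun a b : Fin (m+1) => pderiv (Sum.inr b) (F a)) with hdetp
    have hux : eval x detp = D.det := by
      rw [hdetp, RingHom.map_det, RingHom.mapMatrix_apply]
      congr 1
    -- Step 2: A + B * Dφm = (-(D.det)) • (Matrix.transpose Hmat)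
    have hAB : A + B * Dφm = (-(D.det)) • (Matrix.transpose Hmat) := by
      ext i j
      have hlhs : (A + B * Dφm) i j
          = fderiv ℝ (fun z => eval (Sum.elim z (φ z))
              (Matrix.det (Matrix.of fun a b : Fin (m + 1) =>
                pderiv (if b = Fin.last m then Sum.inl i else Sum.inr b) (F a)))) x₀
              (Pi.single j 1) := by
        rw [chain_fderiv_apply (hdiff x₀ hx₀V) _ j, hgx]
        simp [Matrix.add_apply, Matrix.mul_apply, hA, hB, hDφm]
      have heq : (fun z => eval (Sum.elim z (φ z))
            (Matrix.det (Matrix.of fun a b : Fin (m + 1) =>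
              pderiv (if b = Fin.last m then Sum.inl i else Sum.inr b) (F a))))
          =ᶠ[nhds x₀] fun y => eval (Sum.elim y (φ y)) detp
            * (-(fderiv ℝ (fun z => φ z (Fin.last m)) y (Pi.single i 1))) :=
        Filter.eventuallyEq_of_mem (hVopen.mem_nhds hx₀V) (fun y hy => hkey y hy i)
      -- differentiability facts
      have hu : DifferentiableAt ℝ (fun y => eval (Sum.elim y (φ y)) detp) x₀ :=
        (chain_hasFDerivAt (hdiff x₀ hx₀V) detp).differentiableAt
      have hφ' : ContDiffAt ℝ (⊤ : ℕ∞) φ x₀ := hφ.contDiffAt hU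
      have hψ : ContDiffAt ℝ (⊤ : ℕ∞) (fun z => φ z (Fin.last m)) x₀ :=
        ((ContinuousLinearMap.proj (Fin.last m) :
          ((Fin (m+1) → ℝ) →L[ℝ] ℝ)).contDiff.contDiffAt).comp x₀ hφ'
      have hψ' : ContDiffAt ℝ 1 (fderiv ℝ (fun z => φ z (Fin.last m))) x₀ :=
        hψ.fderiv_right (by norm_cast)
      have hw : DifferentiableAt ℝ
          (fun y => fderiv ℝ (fun z => φ z (Fin.last m)) y (Pi.single i 1)) x₀ :=
        (hψ'.differentiableAt one_ne_zero).clm_apply (differentiableAt_const _)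
      have hw0 : fderiv ℝ (fun z => φ z (Fin.last m)) x₀ (Pi.single i 1) = 0 := by
        rw [hcrit]; rfl
      have hrhs : fderiv ℝ (fun y => eval (Sum.elim y (φ y)) detp
            * (-(fderiv ℝ (fun z => φ z (Fin.last m)) y (Pi.single i 1)))) x₀
            (Pi.single j 1)
          = (-(D.det)) * Hmat j i := by
        rw [fderiv_fun_mul hu (show DifferentiableAt ℝ
          (fun y => -(fderiv ℝ (fun z => φ z (Fin.last m)) y (Pi.single i 1))) x₀ from hw.neg)]
        simp only [ContinuousLinearMap.add_apply, ContinuousLinearMap.smul_apply,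
          smul_eq_mul, hw0, neg_zero, zero_mul, add_zero]
        rw [fderiv_fun_neg]
        simp only [ContinuousLinearMap.neg_apply]
        rw [hgx, hux]
        simp only [hHmat, Matrix.of_apply]
        ring
      rw [Matrix.smul_apply, Matrix.transpose_apply, hlhs, heq.fderiv_eq, hrhs]
      simp
    -- Step 3: block determinant computation
    have hPDmat : P + D * Dφm = 0 := by
      ext a j
      simp only [Matrix.add_apply, Matrix.mul_apply, Matrix.zero_apply]
      exact hPD a j
    have hN : (Matrix.fromBlocks (1 : Matrix (Fin p) (Fin p) ℝ) 0 Dφm 1).det = 1 := by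
      rw [Matrix.det_fromBlocks_zero₁₂]
      simp
    have hmul : (Matrix.fromBlocks A B P D) * (Matrix.fromBlocks 1 0 Dφm 1)
        = Matrix.fromBlocks (A + B * Dφm) B 0 D := by
      have e1 : A * (1 : Matrix (Fin p) (Fin p) ℝ) + B * Dφm = A + B * Dφm := by
        rw [Matrix.mul_one]
      have e2 : A * (0 : Matrix (Fin p) (Fin (m+1)) ℝ)
          + B * (1 : Matrix (Fin (m+1)) (Fin (m+1)) ℝ) = B := by
        rw [Matrix.mul_zero, Matrix.mul_one, zero_add]
      have e3 : P * (1 : Matrix (Fin p) (Fin p) ℝ) + D * Dφm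
          = (0 : Matrix (Fin (m+1)) (Fin p) ℝ) := by
        rw [Matrix.mul_one]; exact hPDmat
      have e4 : P * (0 : Matrix (Fin p) (Fin (m+1)) ℝ)
          + D * (1 : Matrix (Fin (m+1)) (Fin (m+1)) ℝ) = D := by
        rw [Matrix.mul_zero, Matrix.mul_one, zero_add]
      rw [Matrix.fromBlocks_multiply, e1, e2, e3, e4]
    have hdet : (Matrix.fromBlocks A B P D).det
        = (A + B * Dφm).det * D.det := by
      have := congrArg Matrix.det hmul
      rw [Matrix.det_mul, hN, mul_one, Matrix.det_fromBlocks_zero₂₁] at this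
      exact this
    rw [hdet, hAB]
    have hsmul : ((-(D.det)) • (Matrix.transpose Hmat)).det = (-(D.det))^p * Hmat.det := by
      rw [Matrix.det_smul, Matrix.det_transpose]
      simp
    rw [hsmul]
    exact mul_ne_zero (mul_ne_zero (pow_ne_zero _ (neg_ne_zero.mpr hdetD)) hhess) hdetD
end
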